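/- (The multiplicative cost with the exponential operator valued cost equals the risk-sensitive cost.) Let Γ be a controlled transfer operator with p(y|u,ω) ≠ 0 for every u ∈ U, y ∈ Y and every normalized state ω. Let L be a cost function, N a positive semidefinite Hermitian matrix, μ > 0, and set R(u)ω̂ = (tr(exp(μ L(u)) ω̂)/tr ω̂) · ω̂ (matrix exponential; R(u)0 = 0) and F = exp(μ N). Then for every normalized state ω₀ and every feedback controller K, the multiplicative cost J^μ_{ω₀,0}(K) equals ∑ over (y_1,…,y_M) ∈ Y^M of (∏_{k=0}^{M−1} p(y_{k+1}|u_k, ω_k)) · (∏_{k=0}^{M−1} tr(exp(μ L(u_k)) ω_k)) · tr(exp(μ N) ω_M), where ω_0 = ω₀, u_k = K_k(y_1,…,y_k), and ω_{k+1} = Λ_Γ(u_k, y_{k+1}) ω_k; that is, J^μ_{ω₀,0}(K) = E^K_{ω₀,0}[∏_{k=0}^{M−1} ⟨ω_k, e^{μL(u_k)}⟩ · ⟨ω_M, e^{μN}⟩], the risk-sensitive cost functional. -/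

import Mathlib

open Matrix BigOperators
open scoped ComplexOrder

noncomputable section

/-- Complex `n × n` matrices. -/
abbrev Mat (n : ℕ) := Matrix (Fin n) (Fin n) ℂ

/-- Real part of the trace. -/
def trR {n : ℕ} (A : Mat n) : ℝ := A.trace.re

/-- The matrix exponential. -/
def expM {n : ℕ} (A : Mat n) : Mat n := NormedSpace.exp A

/-- The probability `p(y|u,ω) = tr(Γ(u,y)ω)`. -/
def pDist {n : ℕ} {U Y : Type*} (Γ : U → Y → Mat n →ₗ[ℂ] Mat n)
    (u : U) (y : Y) (ω : Mat n) : ℝ := trR (Γ u y ω)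

/-- The normalized conditional state `Λ_Γ(u,y)ω = Γ(u,y)ω / p(y|u,ω)` (equal to `0`
when `p(y|u,ω) = 0`). -/
def lamState {n : ℕ} {U Y : Type*} (Γ : U → Y → Mat n →ₗ[ℂ] Mat n)
    (u : U) (y : Y) (ω : Mat n) : Mat n := (pDist Γ u y ω)⁻¹ • Γ u y ω

/-- The exponential operator valued cost
`R(u)ωh = (tr(exp(μ L(u)) ωh)/tr ωh) • ωh` (with `R(u)0 = 0` by the division
convention). -/
def Rexp {n : ℕ} {U : Type*} (μ : ℝ) (L : U → Mat n) (u : U) (ωh : Mat n) : Mat n :=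
  (trR (expM (μ • L u) * ωh) / trR ωh) • ωh

/-- The cost functional `G` of the multiplicative problem, with controls chosen by the
controller `K` from the accumulated record. -/
def Gcost {n : ℕ} {U Y : Type*} (Γ : U → Y → Mat n →ₗ[ℂ] Mat n)
    (R : U → Mat n → Mat n) (F : Mat n) (K : List Y → U) :
    List Y → Mat n → List Y → ℝ
  | _, ωh, [] => trR (F * ωh)
  | rec, ωh, y :: ys =>
      Gcost Γ R F K (rec ++ [y]) (Γ (K rec) y (R (K rec) ωh)) ys

/-- The risk-sensitive running quantity
`(∏_k p(y_{k+1}|u_k,ω_k) · tr(exp(μ L(u_k)) ω_k)) · tr(exp(μ N) ω_M)` along the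
record, where `ω` follows the normalized conditional dynamics. -/
def rsCostProd {n : ℕ} {U Y : Type*} (Γ : U → Y → Mat n →ₗ[ℂ] Mat n)
    (μ : ℝ) (L : U → Mat n) (N : Mat n) (K : List Y → U) :
    Mat n → List Y → List Y → ℝ
  | ω, _, [] => trR (expM (μ • N) * ω)
  | ω, rec, y :: ys =>
      pDist Γ (K rec) y ω * trR (expM (μ • L (K rec)) * ω)
        * rsCostProd Γ μ L N K (lamState Γ (K rec) y ω) (rec ++ [y]) ys

/-!
Along a fixed measurement record, the unnormalized state of the multiplicative problem stays a
scalar multiple `c • ω` of the normalized filter state `ω`. One step multiplies the scalar by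
`⟨ω, e^{μL(u)}⟩` (the exponential cost `R` acts on `c • ω` as this scalar, because `tr ω = 1`)
and by `p(y|u,ω)` (since `Γ(u,y)ω = p(y|u,ω) • Λ_Γ(u,y)ω`), while `ω` moves to `Λ_Γ(u,y)ω`,
which is again a state. Hence the cost of `c • ω` is `c` times the risk-sensitive product.
-/

section CostFactorization

variable {n : ℕ} {U Y : Type*}

lemma trR_smul (c : ℝ) (A : Mat n) : trR (c • A) = c * trR A := by
  simp [trR, Matrix.trace_smul]

lemma trR_eq_one_of_trace_eq_one {A : Mat n} (h : A.trace = 1) : trR A = 1 := by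
  simp [trR, h]

lemma Matrix.PosSemidef.trR_nonneg {A : Mat n} (hA : A.PosSemidef) : 0 ≤ trR A :=
  (Complex.nonneg_iff.1 hA.trace_nonneg).1

lemma Matrix.PosSemidef.trace_eq_trR {A : Mat n} (hA : A.PosSemidef) : A.trace = trR A :=
  Complex.eq_re_of_ofReal_le (by exact_mod_cast hA.trace_nonneg)

section ConditionalState

variable (Γ : U → Y → Mat n →ₗ[ℂ] Mat n) {u : U} {y : Y} {ω : Mat n}

lemma pDist_smul_lamState (hp : pDist Γ u y ω ≠ 0) :
    pDist Γ u y ω • lamState Γ u y ω = Γ u y ω := by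
  rw [lamState, smul_smul, mul_inv_cancel₀ hp, one_smul]

lemma lamState_posSemidef (hΓ : (Γ u y ω).PosSemidef) : (lamState Γ u y ω).PosSemidef :=
  hΓ.smul (inv_nonneg.2 hΓ.trR_nonneg)

lemma lamState_trace (hΓ : (Γ u y ω).PosSemidef) (hp : pDist Γ u y ω ≠ 0) :
    (lamState Γ u y ω).trace = 1 := by
  rw [lamState, trace_smul, hΓ.trace_eq_trR, Complex.real_smul, ← Complex.ofReal_mul]
  exact_mod_cast inv_mul_cancel₀ hp

end ConditionalState

lemma Rexp_smul_of_trR_eq_one (μ : ℝ) (L : U → Mat n) (u : U) {ω : Mat n} (hω : trR ω = 1)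
    (c : ℝ) : Rexp μ L u (c • ω) = (c * trR (expM (μ • L u) * ω)) • ω := by
  rcases eq_or_ne c 0 with rfl | hc
  · simp [Rexp]
  · rw [Rexp, mul_smul_comm, trR_smul, trR_smul, hω, smul_smul, mul_one, div_mul_cancel₀ _ hc]

theorem Gcost_smul_eq_mul_rsCostProd (Γ : U → Y → Mat n →ₗ[ℂ] Mat n)
    (hPSD : ∀ (u : U) (y : Y) (ω : Mat n), ω.PosSemidef → (Γ u y ω).PosSemidef)
    (hp : ∀ (u : U) (y : Y) (ω : Mat n), ω.PosSemidef → ω.trace = 1 → pDist Γ u y ω ≠ 0)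
    (μ : ℝ) (L : U → Mat n) (N : Mat n) (K : List Y → U) (ys : List Y) :
    ∀ (rec : List Y) {ω : Mat n}, ω.PosSemidef → ω.trace = 1 → ∀ c : ℝ,
      Gcost Γ (Rexp μ L) (expM (μ • N)) K rec (c • ω) ys
        = c * rsCostProd Γ μ L N K ω rec ys := by
  induction ys with
  | nil =>
    intro rec ω _ _ c
    rw [Gcost, rsCostProd, mul_smul_comm, trR_smul]
  | cons y ys ih =>
    intro rec ω hω hωtr c
    have hΓ := hPSD (K rec) y ω hω
    have hpne := hp (K rec) y ω hω hωtr
    calc Gcost Γ (Rexp μ L) (expM (μ • N)) K rec (c • ω) (y :: ys)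
        = Gcost Γ (Rexp μ L) (expM (μ • N)) K (rec ++ [y])
            ((c * trR (expM (μ • L (K rec)) * ω) * pDist Γ (K rec) y ω) •
              lamState Γ (K rec) y ω) ys := by
          rw [Gcost, Rexp_smul_of_trR_eq_one μ L _ (trR_eq_one_of_trace_eq_one hωtr),
            LinearMap.map_smul_of_tower, ← pDist_smul_lamState Γ hpne, smul_smul]
      _ = c * rsCostProd Γ μ L N K ω rec (y :: ys) := by
          rw [ih _ (lamState_posSemidef Γ hΓ) (lamState_trace Γ hΓ hpne), rsCostProd]
          ring

end CostFactorization

theorem multiplicative_cost_eq_risk_sensitive_cost_general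
    {n : ℕ} {U Y : Type*} [Fintype Y]
    (Γ : U → Y → Mat n →ₗ[ℂ] Mat n)
    (hPSD : ∀ (u : U) (y : Y) (ω : Mat n), ω.PosSemidef → (Γ u y ω).PosSemidef)
    (hp : ∀ (u : U) (y : Y) (ω : Mat n), ω.PosSemidef → ω.trace = 1 →
      pDist Γ u y ω ≠ 0)
    (L : U → Mat n)
    (N : Mat n)
    (μ : ℝ)
    (M : ℕ)
    (ω₀ : Mat n) (hω₀ : ω₀.PosSemidef) (hω₀tr : ω₀.trace = 1)
    (K : List Y → U) :
    ∑ ys : Fin M → Y, Gcost Γ (Rexp μ L) (expM (μ • N)) K [] ω₀ (List.ofFn ys)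
      = ∑ ys : Fin M → Y, rsCostProd Γ μ L N K ω₀ [] (List.ofFn ys) := by
  refine Finset.sum_congr rfl fun ys _ => ?_
  simpa using Gcost_smul_eq_mul_rsCostProd Γ hPSD hp μ L N K (List.ofFn ys) [] hω₀ hω₀tr 1

/-- with the exponential operator valued cost `R` and `F = exp(μN)`, the
multiplicative cost `J^μ_{ω₀,0}(K)` equals the risk-sensitive cost functional
`E[∏_k ⟨ω_k, e^{μL(u_k)}⟩ · ⟨ω_M, e^{μN}⟩]`. -/
theorem multiplicative_cost_eq_risk_sensitive_cost
    {n : ℕ} {U Y : Type*} [Fintype U] [Nonempty U] [Fintype Y] [Nonempty Y]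
    (Γ : U → Y → Mat n →ₗ[ℂ] Mat n)
    (hPSD : ∀ (u : U) (y : Y) (ω : Mat n), ω.PosSemidef → (Γ u y ω).PosSemidef)
    (hNorm : ∀ (u : U) (ω : Mat n), ∑ y : Y, (Γ u y ω).trace = ω.trace)
    (hp : ∀ (u : U) (y : Y) (ω : Mat n), ω.PosSemidef → ω.trace = 1 →
      pDist Γ u y ω ≠ 0)
    (L : U → Mat n) (hL : ∀ u, (L u).PosSemidef)
    (N : Mat n) (hN : N.PosSemidef)
    (μ : ℝ) (hμ : 0 < μ)
    (M : ℕ) (hM : 1 ≤ M)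
    (ω₀ : Mat n) (hω₀ : ω₀.PosSemidef) (hω₀tr : ω₀.trace = 1)
    (K : List Y → U) :
    ∑ ys : Fin M → Y, Gcost Γ (Rexp μ L) (expM (μ • N)) K [] ω₀ (List.ofFn ys)
      = ∑ ys : Fin M → Y, rsCostProd Γ μ L N K ω₀ [] (List.ofFn ys) :=
  multiplicative_cost_eq_risk_sensitive_cost_general Γ hPSD hp L N μ M ω₀ hω₀ hω₀tr K
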